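/- (Proposition A.1) For any crossover design d in the class Λ_{t+1,n,p}, the replication of the control treatment in the first p−1 periods satisfies r̃_{d0} ≤ n(p−1)/2, i.e., 2·r̃_{d0} ≤ n(p−1). -/

import Mathlib

open Finset

/-- Number of periods (among the `p` periods, 0-indexed `0,…,p-1`) in which unit `u`
receives treatment `i` under design `d`. -/
def nC (d : ℕ → ℕ → ℕ) (p i u : ℕ) : ℕ :=
  ((Finset.range p).filter fun k => d k u = i).card

/-- Number of periods among the first `p-1` periods in which unit `u` receives
treatment `i` under design `d`. -/
def nT (d : ℕ → ℕ → ℕ) (p i u : ℕ) : ℕ :=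
  ((Finset.range (p - 1)).filter fun k => d k u = i).card

/-- Number of units (among `n` units) receiving treatment `i` in period `k`. -/
def lC (d : ℕ → ℕ → ℕ) (n i k : ℕ) : ℕ :=
  ((Finset.range n).filter fun u => d k u = i).card

/-- Number of appearances of treatment `i` immediately preceded by treatment `j`. -/
def mC (d : ℕ → ℕ → ℕ) (p n i j : ℕ) : ℕ :=
  ∑ u ∈ Finset.range n,
    ((Finset.range (p - 1)).filter fun k => d (k + 1) u = i ∧ d k u = j).card

/-- Total replication of treatment `i` in the design. -/
def rC (d : ℕ → ℕ → ℕ) (p n i : ℕ) : ℕ := ∑ u ∈ Finset.range n, nC d p i u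

/-- Total replication of treatment `i` in the first `p-1` periods. -/
def rT (d : ℕ → ℕ → ℕ) (p n i : ℕ) : ℕ := ∑ u ∈ Finset.range n, nT d p i u

/- Since the control is never preceded by itself, no unit receives it in two consecutive periods,
so any two consecutive periods together contain the control at most `n` times. The control appears
equally often, say `l` times, in every period; taking two consecutive periods gives `2 l ≤ n`,
and `r̃_{d0} = (p - 1) l`. -/

theorem not_consecutive_of_mC_eq_zero {d : ℕ → ℕ → ℕ} {p n i j : ℕ} (h : mC d p n i j = 0)
    {u k : ℕ} (hu : u < n) (hk : k < p - 1) : ¬(d (k + 1) u = i ∧ d k u = j) := fun hij => by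
  have hempty := card_eq_zero.1 (Finset.sum_eq_zero_iff.1 h u (mem_range.2 hu))
  exact eq_empty_iff_forall_notMem.1 hempty k (mem_filter.2 ⟨mem_range.2 hk, hij⟩)

theorem lC_add_lC_succ_le {d : ℕ → ℕ → ℕ} {n i k : ℕ}
    (h : ∀ u < n, ¬(d (k + 1) u = i ∧ d k u = i)) :
    lC d n i k + lC d n i (k + 1) ≤ n := by
  have hdisj : Disjoint ((range n).filter fun u => d k u = i)
      ((range n).filter fun u => d (k + 1) u = i) :=
    disjoint_filter.2 fun u hu hk hk1 => h u (mem_range.1 hu) ⟨hk1, hk⟩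
  calc lC d n i k + lC d n i (k + 1) = (((range n).filter fun u => d k u = i) ∪
        (range n).filter fun u => d (k + 1) u = i).card := (card_union_of_disjoint hdisj).symm
    _ ≤ (range n).card := card_le_card (union_subset (filter_subset _ _) (filter_subset _ _))
    _ = n := card_range n

theorem rT_eq_sum_lC (d : ℕ → ℕ → ℕ) (p n i : ℕ) :
    rT d p n i = ∑ k ∈ range (p - 1), lC d n i k := by
  simp only [rT, nT, lC, card_filter]
  exact sum_comm

theorem stmt4_general (t n p : ℕ) (hp : 3 ≤ p)
    (d : ℕ → ℕ → ℕ)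
    (hper : ∀ k < p, p * lC d n 0 k = rC d p n 0)
    (hself : ∀ i ≤ t, mC d p n i i = 0) :
    2 * rT d p n 0 ≤ n * (p - 1) := by
  have hconst : ∀ k < p, lC d n 0 k = lC d n 0 0 := fun k hk =>
    Nat.eq_of_mul_eq_mul_left (by omega) ((hper k hk).trans (hper 0 (by omega)).symm)
  have htwo : 2 * lC d n 0 0 ≤ n := by
    have hpair := lC_add_lC_succ_le fun u hu =>
      not_consecutive_of_mC_eq_zero (hself 0 t.zero_le) hu (k := 0) (by omega)
    rw [hconst 1 (by omega)] at hpair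
    omega
  rw [rT_eq_sum_lC, sum_congr rfl fun k hk => hconst k (by simp at hk; omega), sum_const,
    card_range, smul_eq_mul]
  calc 2 * ((p - 1) * lC d n 0 0) = (p - 1) * (2 * lC d n 0 0) := by ring
    _ ≤ (p - 1) * n := Nat.mul_le_mul_left _ htwo
    _ = n * (p - 1) := Nat.mul_comm _ _

/-- Proposition A.1: for any design in the class `Λ_{t+1,n,p}` (the control appears equally
often in every period and no treatment is immediately preceded by itself), the replication
of the control in the first `p-1` periods satisfies `r̃_{d0} ≤ n(p-1)/2`. -/
theorem stmt4 (t n p : ℕ) (ht : 0 < t) (hn : 0 < n) (hp : 3 ≤ p) (hpt : p ≤ t + 1)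
    (d : ℕ → ℕ → ℕ) (hd : ∀ k < p, ∀ u < n, d k u ≤ t)
    (hper : ∀ k < p, p * lC d n 0 k = rC d p n 0)
    (hself : ∀ i ≤ t, mC d p n i i = 0) :
    2 * rT d p n 0 ≤ n * (p - 1) :=
  stmt4_general t n p hp d hper hself
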